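/- arXiv:1306.1406 — 5 statements merged into one kernel-verified Lean document; each statement's English description precedes it below -/
import Mathlib

section
/- Let $\lambda\neq 0$, $F(\kappa)=\tfrac14\kappa^4-\tfrac{\lambda^2}{2}\kappa^2$, $\kappa_M(E)=\sqrt{\lambda^2+\sqrt{\lambda^4+4E}}$. Then for all sufficiently large $E$ (so that in particular $\kappa_M(E)>\sqrt2|\lambda|$), one has $\int_{\kappa_M/2}^{\kappa_M}\frac{d\kappa}{\sqrt{E-F(\kappa)}} > \int_0^{\kappa_M/2}\frac{d\kappa}{\sqrt{E-F(\kappa)}}$. -/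
open Filter intervalIntegral

set_option maxHeartbeats 2000000 in
/-- With `F(κ) = κ⁴/4 - λ²κ²/2` and `κ_M(E) = √(λ² + √(λ⁴+4E))`, for all
sufficiently large `E` one has `κ_M(E) > √2 |λ|` and
`∫_{κ_M/2}^{κ_M} dκ/√(E - F(κ)) > ∫_0^{κ_M/2} dκ/√(E - F(κ))`. -/
theorem integral_comparison_large_E (l : ℝ) (hl : l ≠ 0) :
    ∀ᶠ E : ℝ in atTop,
      Real.sqrt 2 * |l| < Real.sqrt (l ^ 2 + Real.sqrt (l ^ 4 + 4 * E)) ∧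
      (∫ κ in (0 : ℝ)..(Real.sqrt (l ^ 2 + Real.sqrt (l ^ 4 + 4 * E)) / 2),
          1 / Real.sqrt (E - (κ ^ 4 / 4 - l ^ 2 / 2 * κ ^ 2))) <
      ∫ κ in (Real.sqrt (l ^ 2 + Real.sqrt (l ^ 4 + 4 * E)) / 2)..
          (Real.sqrt (l ^ 2 + Real.sqrt (l ^ 4 + 4 * E))),
          1 / Real.sqrt (E - (κ ^ 4 / 4 - l ^ 2 / 2 * κ ^ 2)) := by
  filter_upwards [eventually_ge_atTop (12 * l ^ 4 + 1)] with E hE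
  have hE1 : (1 : ℝ) ≤ E := by nlinarith [sq_nonneg (l ^ 2)]
  set S := Real.sqrt (l ^ 4 + 4 * E) with hSdef
  have hS0 : 0 ≤ S := Real.sqrt_nonneg _
  have hS2 : S ^ 2 = l ^ 4 + 4 * E := Real.sq_sqrt (by nlinarith [sq_nonneg (l ^ 2)])
  have hS7 : 7 * l ^ 2 < S := by nlinarith [sq_nonneg (l ^ 2)]
  set m := Real.sqrt (l ^ 2 + S) with hmdef
  have hm0 : 0 ≤ m := Real.sqrt_nonneg _
  have hm2 : m ^ 2 = l ^ 2 + S := Real.sq_sqrt (by nlinarith [sq_nonneg l])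
  have hm8 : 8 * l ^ 2 < m ^ 2 := by rw [hm2]; nlinarith [sq_nonneg l]
  have hmpos : 0 < m := by nlinarith [sq_nonneg l]
  set g : ℝ → ℝ := fun κ => 1 / Real.sqrt (E - (κ ^ 4 / 4 - l ^ 2 / 2 * κ ^ 2)) with hgdef
  clear_value S m g
  -- key factorization
  have key : ∀ κ : ℝ, E - (κ ^ 4 / 4 - l ^ 2 / 2 * κ ^ 2)
      = (m ^ 2 - κ ^ 2) * (m ^ 2 + κ ^ 2 - 2 * l ^ 2) / 4 := by
    intro κ
    rw [hm2]
    linear_combination (-1 / 4) * hS2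
  have hpos : ∀ κ : ℝ, 0 ≤ κ → κ < m → 0 < E - (κ ^ 4 / 4 - l ^ 2 / 2 * κ ^ 2) := by
    intro κ h0 h1
    rw [key κ]
    have h2 : κ ^ 2 < m ^ 2 := by nlinarith
    have h3 : 0 < m ^ 2 + κ ^ 2 - 2 * l ^ 2 := by nlinarith [sq_nonneg κ, sq_nonneg l]
    nlinarith [mul_pos (sub_pos.2 h2) h3]
  refine ⟨?_, ?_⟩
  · have hsq : (Real.sqrt 2 * |l|) ^ 2 = 2 * l ^ 2 := by
      rw [mul_pow, Real.sq_sqrt (by norm_num : (0:ℝ) ≤ 2), sq_abs]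
    nlinarith [mul_nonneg (Real.sqrt_nonneg 2) (abs_nonneg l), sq_nonneg l]
  -- lower bound for E - F on [m/2, m]
  have hDpos : (0:ℝ) < 3 / 16 * m ^ 3 := by nlinarith [pow_pos hmpos 3]
  have hlb : ∀ κ : ℝ, m / 2 ≤ κ → κ ≤ m →
      3 / 16 * m ^ 3 * (m - κ) ≤ E - (κ ^ 4 / 4 - l ^ 2 / 2 * κ ^ 2) := by
    intro κ h1 h2
    rw [key κ]
    have hκ0 : 0 < κ := lt_of_lt_of_le (by linarith) h1
    have e1 : m ^ 2 - κ ^ 2 = (m - κ) * (m + κ) := by ring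
    have e2 : m + κ ≥ m := by linarith
    have e3 : m ^ 2 + κ ^ 2 - 2 * l ^ 2 ≥ 3 / 4 * m ^ 2 := by nlinarith [sq_nonneg κ]
    have hmk : 0 ≤ m - κ := by linarith
    nlinarith [mul_nonneg hmk (sq_nonneg m), mul_nonneg (mul_nonneg hmk hm0) hm0,
      mul_le_mul_of_nonneg_left e3 (mul_nonneg hmk (by linarith : (0:ℝ) ≤ m + κ)),
      mul_le_mul_of_nonneg_left e2 hmk]
  -- integrability of g on [m/2, m]
  have hIntPhi : IntervalIntegrable (fun x : ℝ => (m - x) ^ (-(1/2) : ℝ)) MeasureTheory.volume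
      (m / 2) m := by
    have h := (intervalIntegrable_rpow' (show (-1:ℝ) < -(1/2) by norm_num)
      (a := 0) (b := m / 2)).comp_sub_left m
    have h2 := h.symm
    rw [show m - m / 2 = m / 2 by ring, show m - (0:ℝ) = m by ring] at h2
    exact h2
  have hmeas : Measurable g := by
    rw [hgdef]; fun_prop
  have hIntR : IntervalIntegrable g MeasureTheory.volume (m / 2) m := by
    apply IntervalIntegrable.mono_fun
      ((hIntPhi.const_mul ((Real.sqrt (3 / 16 * m ^ 3))⁻¹)))
      hmeas.aestronglyMeasurable
    rw [Filter.EventuallyLE, MeasureTheory.ae_restrict_iff' measurableSet_uIoc]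
    apply MeasureTheory.ae_of_all
    intro x hx
    rw [Set.uIoc_of_le (by linarith : m / 2 ≤ m)] at hx
    obtain ⟨hx1, hx2⟩ := hx
    have hg0 : 0 ≤ g x := by
      simp only [hgdef]
      positivity
    rw [Real.norm_of_nonneg hg0]
    rcases eq_or_lt_of_le hx2 with h | h
    · have : g x = 0 := by
        simp only [hgdef, h]
        rw [show E - (m ^ 4 / 4 - l ^ 2 / 2 * m ^ 2) = 0 by rw [key m]; ring]
        simp
      rw [this, h]
      simp [Real.norm_of_nonneg, Real.zero_rpow (by norm_num : (-(1/2):ℝ) ≠ 0)]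
    · have hmx : 0 < m - x := by linarith
      have hlbx := hlb x hx1.le hx2
      have h1 : 0 < 3 / 16 * m ^ 3 * (m - x) := mul_pos hDpos hmx
      have h2 : Real.sqrt (3 / 16 * m ^ 3 * (m - x)) ≤
          Real.sqrt (E - (x ^ 4 / 4 - l ^ 2 / 2 * x ^ 2)) := Real.sqrt_le_sqrt hlbx
      have h3 : 0 < Real.sqrt (3 / 16 * m ^ 3 * (m - x)) := Real.sqrt_pos.2 h1
      have h4 : g x ≤ 1 / Real.sqrt (3 / 16 * m ^ 3 * (m - x)) := by
        simp only [hgdef]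
        apply one_div_le_one_div_of_le h3 h2
      have h5 : Real.sqrt (3 / 16 * m ^ 3 * (m - x))
          = Real.sqrt (3 / 16 * m ^ 3) * Real.sqrt (m - x) := Real.sqrt_mul hDpos.le _
      have h6 : (m - x) ^ (-(1/2) : ℝ) = (Real.sqrt (m - x))⁻¹ := by
        rw [Real.rpow_neg hmx.le, Real.sqrt_eq_rpow]
      have h7 : ‖(Real.sqrt (3 / 16 * m ^ 3))⁻¹ * (m - x) ^ (-(1/2) : ℝ)‖
          = (Real.sqrt (3 / 16 * m ^ 3))⁻¹ * (Real.sqrt (m - x))⁻¹ := by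
        rw [h6, Real.norm_of_nonneg (by positivity)]
      rw [h7]
      calc g x ≤ 1 / Real.sqrt (3 / 16 * m ^ 3 * (m - x)) := h4
        _ = (Real.sqrt (3 / 16 * m ^ 3))⁻¹ * (Real.sqrt (m - x))⁻¹ := by
            rw [h5, one_div, mul_inv]
  -- continuity/integrability of g on [0, m/2]
  have hIntL : IntervalIntegrable g MeasureTheory.volume 0 (m / 2) := by
    apply ContinuousOn.intervalIntegrable
    rw [Set.uIcc_of_le (by linarith : (0:ℝ) ≤ m / 2), hgdef]
    apply ContinuousOn.div continuousOn_const
    · exact (Real.continuous_sqrt.comp (by fun_prop)).continuousOn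
    · intro x hx
      exact ne_of_gt (Real.sqrt_pos.2 (hpos x hx.1 (lt_of_le_of_lt hx.2 (by linarith))))
  -- shifted function integrable on [0, m/2]
  have hshift : IntervalIntegrable (fun x => g (x + m / 2)) MeasureTheory.volume 0 (m / 2) := by
    have := hIntR.comp_add_right (m / 2)
    rw [show m / 2 - m / 2 = 0 by ring, show m - m / 2 = m / 2 by ring] at this
    exact this
  -- strict positivity of the difference on (0, m/2)
  have hdiffpos : ∀ x ∈ Set.Ioo (0:ℝ) (m / 2), 0 < g (x + m / 2) - g x := by
    intro x hx
    obtain ⟨hx1, hx2⟩ := hx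
    have hy1 : m / 2 < x + m / 2 := by linarith
    have hy2 : x + m / 2 < m := by linarith
    have hFy := hpos (x + m / 2) (by linarith) hy2
    have h1 : x ^ 2 < (x + m / 2) ^ 2 := by nlinarith [mul_pos hx1 hmpos]
    have h2 : 2 * l ^ 2 < (x + m / 2) ^ 2 + x ^ 2 := by
      nlinarith [sq_nonneg x, mul_pos hx1 hmpos]
    have hFlt : E - ((x + m / 2) ^ 4 / 4 - l ^ 2 / 2 * (x + m / 2) ^ 2)
        < E - (x ^ 4 / 4 - l ^ 2 / 2 * x ^ 2) := by
      nlinarith [mul_pos (sub_pos.2 h1) (sub_pos.2 h2)]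
    have hs1 := Real.sqrt_pos.2 hFy
    have hs2 := Real.sqrt_lt_sqrt hFy.le hFlt
    have : g x < g (x + m / 2) := by
      simp only [hgdef]
      exact one_div_lt_one_div_of_lt hs1 hs2
    linarith
  -- conclude
  have hInt_h : IntervalIntegrable (fun x => g (x + m / 2) - g x) MeasureTheory.volume 0 (m / 2) :=
    hshift.sub hIntL
  have hpos_int : 0 < ∫ x in (0:ℝ)..(m / 2), (g (x + m / 2) - g x) :=
    intervalIntegral_pos_of_pos_on hInt_h hdiffpos (by linarith)
  rw [intervalIntegral.integral_sub hshift hIntL] at hpos_int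
  have hcomp : (∫ x in (0:ℝ)..(m / 2), g (x + m / 2)) = ∫ x in (m / 2)..m, g x := by
    have := intervalIntegral.integral_comp_add_right (a := 0) (b := m / 2) g (m / 2)
    rw [show (0:ℝ) + m / 2 = m / 2 by ring, show m / 2 + m / 2 = m by ring] at this
    exact this
  rw [hcomp] at hpos_int
  linarith
end

section
/- Let $\lambda\ne0$ and let $\kappa:[0,\infty)\to\mathbb{R}$ solve $(\kappa')^2+F(\kappa)=E$ with $\kappa(0)=0$, where $F(\kappa)=\tfrac14\kappa^4-\tfrac{\lambda^2}{2}\kappa^2$, and let $L(E)=4\int_0^{\kappa_M(E)}\frac{d\kappa}{\sqrt{E-F(\kappa)}}$ for $E>0$. Then $\int_0^{L(E)}\kappa(s)^2\,ds \to \infty$ as $E\to\infty$. -/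
/-!
While `|κ| < κ_M` the speed `|κ'| = √(E - F κ)` is positive, so `κ` is monotone there and reaches a
level `b < κ_M` after exactly `∫₀^b dx / √(E - F x) ≤ L(E) / 4`. Since
`E - F x = (κ_M² - x²)(x² + c) / 4` with `0 < c ≤ κ_M²`, the speed never exceeds `κ_M² / 2`, so `κ`
needs time at least `1 / (2 κ_M)` to climb from `κ_M / 2` to `3 κ_M / 4`, during which
`κ² ≥ κ_M² / 4`. Hence `∫₀^L κ² ≥ κ_M / 8`, and `κ_M(E) → ∞`.
-/

open Filter Set MeasureTheory intervalIntegral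

lemma exists_first_eq_of_lt_of_le {f : ℝ → ℝ} (hf : Continuous f) {a t c : ℝ} (hat : a ≤ t)
    (hfa : f a < c) (hft : c ≤ f t) :
    ∃ τ ∈ Ioc a t, f τ = c ∧ ∀ s ∈ Ico a τ, f s < c := by
  have hivt : ∀ s, a ≤ s → c ≤ f s → ∃ s' ∈ Icc a s, f s' = c := fun s has hfs =>
    intermediate_value_Icc has hf.continuousOn ⟨hfa.le, hfs⟩
  set W := Icc a t ∩ f ⁻¹' {c}
  have hWb : BddBelow W := ⟨a, fun s hs => hs.1.1⟩
  obtain ⟨s₀, hs₀, hfs₀⟩ := hivt t hat hft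
  have hτ : sInf W ∈ W :=
    (isClosed_Icc.inter (isClosed_singleton.preimage hf)).csInf_mem ⟨s₀, hs₀, hfs₀⟩ hWb
  have hτa : a < sInf W := hτ.1.1.lt_of_ne fun h => hfa.ne (h ▸ hτ.2)
  refine ⟨sInf W, ⟨hτa, hτ.1.2⟩, hτ.2, fun s hs => ?_⟩
  by_contra! hcs
  obtain ⟨s', hs', hfs'⟩ := hivt s hs.1 hcs
  have := csInf_le hWb ⟨⟨hs'.1, hs'.2.trans (hs.2.le.trans hτ.1.2)⟩, hfs'⟩
  linarith [hs'.2, hs.2]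

lemma forall_pos_of_hasDerivAt_of_ne_zero {y y' : ℝ → ℝ} {a b : ℝ}
    (hy : ∀ s ∈ Icc a b, HasDerivAt y (y' s) s) (hne : ∀ s ∈ Icc a b, y' s ≠ 0)
    (ha : 0 < y' a) : ∀ s ∈ Icc a b, 0 < y' s := by
  intro s hs
  rcases hasDerivWithinAt_forall_lt_or_forall_gt_of_forall_ne (convex_Icc a b)
    (fun s hs => (hy s hs).hasDerivWithinAt) hne with hneg | hpos
  · exact absurd (hneg a ⟨le_rfl, hs.1.trans hs.2⟩) ha.not_gt
  · exact hpos s hs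

lemma intervalIntegrable_one_div_sqrt_of_mul_sub_le {P : ℝ → ℝ} (hP : Continuous P) {k m : ℝ}
    (hk : 0 < k) (hm : 0 ≤ m) (hPk : ∀ x ∈ Ioo 0 m, k * (m - x) ≤ P x) :
    IntervalIntegrable (fun x => 1 / √(P x)) volume 0 m := by
  have hdom : IntervalIntegrable (fun x => (m - x) ^ (-(1 / 2) : ℝ) / √k) volume 0 m := by
    have := (intervalIntegrable_rpow' (a := 0) (b := m) (r := -(1 / 2)) (by norm_num)).comp_sub_left
      m
    rw [sub_zero, sub_self] at this
    exact this.symm.div_const _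
  refine hdom.mono_fun (measurable_const.div hP.measurable.sqrt).aestronglyMeasurable ?_
  rw [uIoc_of_le hm]
  filter_upwards [ae_restrict_mem measurableSet_Ioc,
    ae_restrict_of_ae ((countable_singleton m).ae_notMem volume)] with x hx hxm
  have hx' : x ∈ Ioo 0 m := ⟨hx.1, hx.2.lt_of_ne hxm⟩
  have hmx : 0 < m - x := sub_pos.2 hx'.2
  rw [Real.norm_of_nonneg (by positivity), Real.norm_of_nonneg (by positivity),
    Real.rpow_neg hmx.le, ← Real.sqrt_eq_rpow, one_div, div_eq_mul_inv, ← mul_inv,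
    ← Real.sqrt_mul hmx.le, mul_comm (m - x)]
  exact inv_anti₀ (by positivity) (Real.sqrt_le_sqrt (hPk x hx'))

lemma strictMonoOn_Icc_of_hasDerivAt_pos {y y' : ℝ → ℝ} {a b : ℝ}
    (hy : ∀ s, HasDerivAt y (y' s) s) (hpos : ∀ s ∈ Icc a b, 0 < y' s) :
    StrictMonoOn y (Icc a b) :=
  strictMonoOn_of_hasDerivWithinAt_pos (convex_Icc a b)
    (fun s _ => (hy s).continuousAt.continuousWithinAt) (fun s _ => (hy s).hasDerivWithinAt)
    (fun s hs => hpos s (interior_subset hs))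

section Autonomous

variable {P y y' : ℝ → ℝ}

lemma integral_one_div_sqrt_eq_sub (hP : Continuous P) (hy : ∀ s, HasDerivAt y (y' s) s)
    (hode : ∀ s, y' s ^ 2 = P (y s)) {a b : ℝ} (hab : a ≤ b)
    (hpos : ∀ s ∈ Icc a b, 0 < y' s) :
    ∫ x in y a..y b, 1 / √(P x) = b - a := by
  have hspeed : ∀ s ∈ Icc a b, √(P (y s)) = y' s := fun s hs => by
    rw [← hode, Real.sqrt_sq (hpos s hs).le]
  rw [← integral_comp_mul_deriv' (fun s _ => hy s), ← integral_one]
  · refine integral_congr fun s hs => ?_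
    rw [uIcc_of_le hab] at hs
    simp only [Function.comp_apply, hspeed s hs, one_div_mul_cancel (hpos s hs).ne']
  · rw [uIcc_of_le hab]
    exact ((hP.comp (continuous_iff_continuousAt.2 fun s => (hy s).continuousAt)).sqrt
      |>.continuousOn).congr fun s hs => (hspeed s hs).symm
  · rintro _ ⟨s, hs, rfl⟩
    rw [uIcc_of_le hab] at hs
    refine (continuousAt_const.div (hP.continuousAt.sqrt) ?_).continuousWithinAt
    rw [hspeed s hs]
    exact (hpos s hs).ne'

lemma deriv_pos_of_abs_le (hy : ∀ s, HasDerivAt y (y' s) s) (hode : ∀ s, y' s ^ 2 = P (y s))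
    {b t : ℝ} (hPpos : ∀ x ∈ Icc (-b) b, 0 < P x) (hy'0 : 0 < y' 0)
    (hyb : ∀ s ∈ Icc 0 t, |y s| ≤ b) : ∀ s ∈ Icc 0 t, 0 < y' s :=
  forall_pos_of_hasDerivAt_of_ne_zero (fun s _ => hy s)
    (fun s hs h => (hPpos _ (abs_le.1 (hyb s hs))).ne' (by rw [← hode, h, zero_pow two_ne_zero]))
    hy'0

lemma exists_eq_of_integral_le (hP : Continuous P) (hy : ∀ s, HasDerivAt y (y' s) s)
    (hode : ∀ s, y' s ^ 2 = P (y s)) (hy0 : y 0 = 0) (hy'0 : 0 < y' 0) {b T : ℝ} (hb : 0 < b)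
    (hPpos : ∀ x ∈ Icc (-b) b, 0 < P x) (hT : ∫ x in 0..b, 1 / √(P x) ≤ T) :
    ∃ τ ∈ Ioc 0 T, y τ = b ∧ StrictMonoOn y (Icc 0 τ) := by
  have hyc : Continuous y := continuous_iff_continuousAt.2 fun s => (hy s).continuousAt
  have hgc : ContinuousOn (fun x => 1 / √(P x)) (Icc (-b) b) := fun x hx =>
    (continuousAt_const.div hP.continuousAt.sqrt
      (Real.sqrt_pos.2 (hPpos x hx)).ne').continuousWithinAt
  have hg : ∀ u ∈ Icc (-b) b, ∀ v ∈ Icc (-b) b,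
      IntervalIntegrable (fun x => 1 / √(P x)) volume u v :=
    fun u hu v hv => (hgc.mono (uIcc_subset_Icc hu hv)).intervalIntegrable
  have hb' : b ∈ Icc (-b) b := ⟨by linarith, le_rfl⟩
  obtain ⟨s₀, hs₀, hbs₀⟩ : ∃ s₀ ∈ Icc 0 T, b ≤ |y s₀| := by
    by_contra! hstay
    have hT0 : 0 ≤ T := (integral_nonneg hb.le fun x _ => by positivity).trans hT
    have hpos := deriv_pos_of_abs_le hy hode hPpos hy'0 fun s hs => (hstay s hs).le
    have hyT : 0 ≤ y T := hy0 ▸ (strictMonoOn_Icc_of_hasDerivAt_pos hy hpos).monotoneOn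
      ⟨le_rfl, hT0⟩ ⟨hT0, le_rfl⟩ hT0
    have hyTb : y T < b := (le_abs_self _).trans_lt (hstay T ⟨hT0, le_rfl⟩)
    have htime := integral_one_div_sqrt_eq_sub hP hy hode hT0 hpos
    rw [hy0, sub_zero] at htime
    have hrest : 0 < ∫ x in y T..b, 1 / √(P x) :=
      intervalIntegral_pos_of_pos_on (hg _ ⟨by linarith, hyTb.le⟩ b hb')
        (fun x hx => by have := hPpos x ⟨by linarith [hx.1], hx.2.le⟩; positivity) hyTb
    have := integral_add_adjacent_intervals (hg 0 ⟨by linarith, hb.le⟩ _ ⟨by linarith, hyTb.le⟩)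
      (hg _ ⟨by linarith, hyTb.le⟩ b hb')
    linarith
  obtain ⟨τ, hτ, hyτ, hbefore⟩ := exists_first_eq_of_lt_of_le (continuous_abs.comp hyc) hs₀.1
    (by simpa [hy0] using hb) hbs₀
  have hmono := strictMonoOn_Icc_of_hasDerivAt_pos hy <| deriv_pos_of_abs_le hy hode hPpos hy'0
    fun s hs => hs.2.eq_or_lt.elim (fun h => (h ▸ hyτ).le) fun h => (hbefore s ⟨hs.1, h⟩).le
  have hyτpos : 0 < y τ := hy0 ▸ hmono ⟨le_rfl, hτ.1.le⟩ ⟨hτ.1.le, le_rfl⟩ hτ.1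
  exact ⟨τ, ⟨hτ.1, hτ.2.trans hs₀.2⟩, by simpa [abs_of_pos hyτpos] using hyτ, hmono⟩

theorem div_sqrt_le_integral_sq (hP : Continuous P) (hy : ∀ s, HasDerivAt y (y' s) s)
    (hode : ∀ s, y' s ^ 2 = P (y s)) (hy0 : y 0 = 0) (hy'0 : 0 < y' 0) {a b M T : ℝ}
    (ha : 0 < a) (hab : a < b) (hPpos : ∀ x ∈ Icc (-b) b, 0 < P x) (hPM : ∀ x, P x ≤ M)
    (hT : ∫ x in 0..b, 1 / √(P x) ≤ T) :
    a ^ 2 * (b - a) / √M ≤ ∫ s in 0..T, y s ^ 2 := by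
  obtain ⟨τ, hτ, hyτ, hmono⟩ :=
    exists_eq_of_integral_le hP hy hode hy0 hy'0 (ha.trans hab) hPpos hT
  have hyc : Continuous y := continuous_iff_continuousAt.2 fun s => (hy s).continuousAt
  obtain ⟨σ, hσ, hyσ⟩ := intermediate_value_Icc hτ.1.le hyc.continuousOn
    (show a ∈ Icc (y 0) (y τ) by rw [hy0, hyτ]; exact ⟨ha.le, hab.le⟩)
  have hspeed : b - a ≤ √M * (τ - σ) := by
    have hderiv : ∀ s, deriv y s ≤ √M := fun s => by
      rw [(hy s).deriv]
      exact (le_abs_self _).trans (Real.abs_le_sqrt ((hode s).trans_le (hPM _)))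
    simpa [hyτ, hyσ] using
      image_sub_le_mul_sub_of_deriv_le (fun s => (hy s).differentiableAt) hderiv hσ.2
  have hsq : ∀ u v, IntervalIntegrable (fun s => y s ^ 2) volume u v :=
    fun u v => (hyc.pow 2).intervalIntegrable u v
  have hlarge : a ^ 2 * (τ - σ) ≤ ∫ s in σ..τ, y s ^ 2 := by
    have := integral_mono_on hσ.2 intervalIntegrable_const (hsq σ τ) fun s hs =>
      pow_le_pow_left₀ ha.le (hyσ ▸ hmono.monotoneOn ⟨hσ.1, hσ.2⟩ ⟨hσ.1.trans hs.1, hs.2⟩ hs.1) 2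
    simpa [mul_comm] using this
  have hsub : ∫ s in σ..τ, y s ^ 2 ≤ ∫ s in 0..T, y s ^ 2 :=
    integral_mono_interval hσ.1 hσ.2 hτ.2 (Eventually.of_forall fun s => sq_nonneg (y s))
      (hsq 0 T)
  have hM : 0 < √M := Real.sqrt_pos.2 ((hPpos 0 ⟨by linarith, by linarith⟩).trans_le (hPM 0))
  calc a ^ 2 * (b - a) / √M ≤ a ^ 2 * (τ - σ) := by
        rw [div_le_iff₀ hM, mul_assoc, mul_comm (τ - σ)]
        exact mul_le_mul_of_nonneg_left hspeed (sq_nonneg a)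
    _ ≤ ∫ s in 0..T, y s ^ 2 := hlarge.trans hsub

end Autonomous

section Quartic

variable {m c : ℝ}

lemma quartic_le_sq (hc : 0 ≤ c) (hcm : c ≤ m ^ 2) (x : ℝ) :
    (m ^ 2 - x ^ 2) * (x ^ 2 + c) / 4 ≤ (m ^ 2 / 2) ^ 2 := by
  nlinarith [sq_nonneg (m ^ 2 - c - 2 * x ^ 2)]

lemma mul_sub_le_quartic (hc : 0 ≤ c) {x : ℝ} (hx : x ∈ Ioo 0 m) :
    m * c / 4 * (m - x) ≤ (m ^ 2 - x ^ 2) * (x ^ 2 + c) / 4 := by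
  have hmx : 0 ≤ m - x := by linarith [hx.2]
  nlinarith [mul_nonneg (mul_nonneg hmx hx.1.le) hc, mul_nonneg (mul_nonneg hmx (sq_nonneg x))
    (add_pos hx.1 (hx.1.trans hx.2)).le]

theorem div_eight_le_integral_sq (hm : 0 < m) (hc : 0 < c) (hcm : c ≤ m ^ 2) {y y' : ℝ → ℝ}
    (hy : ∀ s, HasDerivAt y (y' s) s)
    (hode : ∀ s, y' s ^ 2 = (m ^ 2 - y s ^ 2) * (y s ^ 2 + c) / 4) (hy0 : y 0 = 0)
    (hy'0 : y' 0 ≠ 0) :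
    m / 8 ≤ ∫ s in 0..(4 * ∫ x in 0..m, 1 / √((m ^ 2 - x ^ 2) * (x ^ 2 + c) / 4)), y s ^ 2 := by
  wlog hpos : 0 < y' 0 generalizing y y'
  · simpa using this (fun s => (hy s).neg) (by simpa using hode) (by simp [hy0])
      (neg_ne_zero.2 hy'0) (neg_pos.2 (hy'0.lt_or_gt.resolve_right hpos))
  have hP : Continuous fun x : ℝ => (m ^ 2 - x ^ 2) * (x ^ 2 + c) / 4 := by fun_prop
  have hT : ∫ x in 0..3 * m / 4, 1 / √((m ^ 2 - x ^ 2) * (x ^ 2 + c) / 4) ≤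
      4 * ∫ x in 0..m, 1 / √((m ^ 2 - x ^ 2) * (x ^ 2 + c) / 4) := by
    have hnonneg : ∀ x : ℝ, 0 ≤ 1 / √((m ^ 2 - x ^ 2) * (x ^ 2 + c) / 4) := fun x => by positivity
    have := integral_mono_interval (b := 3 * m / 4) le_rfl (by positivity) (by linarith)
      (Eventually.of_forall hnonneg)
      (intervalIntegrable_one_div_sqrt_of_mul_sub_le hP (by positivity) hm.le fun _ hx =>
        mul_sub_le_quartic hc.le hx)
    linarith [integral_nonneg (μ := volume) hm.le fun x _ => hnonneg x]
  have key := div_sqrt_le_integral_sq hP hy hode hy0 hpos (half_pos hm) (by linarith)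
    (fun x hx => by
      have : 0 < m ^ 2 - x ^ 2 := by nlinarith [hx.1, hx.2]
      positivity) (quartic_le_sq hc.le hcm) hT
  rw [Real.sqrt_sq (by positivity)] at key
  convert key using 1
  field_simp
  ring

end Quartic

lemma energy_sub_quartic_eq (l E x : ℝ) (hE : 0 ≤ E) :
    E - (x ^ 4 / 4 - l ^ 2 / 2 * x ^ 2) =
      (√(l ^ 2 + √(l ^ 4 + 4 * E)) ^ 2 - x ^ 2) * (x ^ 2 + (√(l ^ 4 + 4 * E) - l ^ 2)) / 4 := by
  have hS := Real.sq_sqrt (show 0 ≤ l ^ 4 + 4 * E by positivity)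
  rw [Real.sq_sqrt (by positivity)]
  linear_combination (-1 / 4 : ℝ) * hS

lemma tendsto_sqrt_sq_add_sqrt_atTop (l : ℝ) :
    Tendsto (fun E => √(l ^ 2 + √(l ^ 4 + 4 * E))) atTop atTop :=
  Real.tendsto_sqrt_atTop.comp <| tendsto_atTop_add_const_left _ _ <|
    Real.tendsto_sqrt_atTop.comp <| tendsto_atTop_add_const_left _ _ <|
      tendsto_id.const_mul_atTop four_pos

theorem squared_curvature_integral_diverges_general (l : ℝ)
    (F : ℝ → ℝ) (hF : ∀ x, F x = x ^ 4 / 4 - l ^ 2 / 2 * x ^ 2)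
    (κ κ' : ℝ → ℝ → ℝ)
    (hderiv : ∀ E : ℝ, 0 < E → ∀ s : ℝ, HasDerivAt (κ E) (κ' E s) s)
    (hode : ∀ E : ℝ, 0 < E → ∀ s : ℝ, (κ' E s) ^ 2 + F (κ E s) = E)
    (hinit : ∀ E : ℝ, 0 < E → κ E 0 = 0) :
    Tendsto (fun E : ℝ =>
        ∫ s in (0 : ℝ)..(4 * ∫ x in (0 : ℝ)..(Real.sqrt (l ^ 2 + Real.sqrt (l ^ 4 + 4 * E))),
            1 / Real.sqrt (E - F x)), (κ E s) ^ 2)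
      atTop atTop := by
  refine tendsto_atTop_mono' atTop ?_ ((tendsto_sqrt_sq_add_sqrt_atTop l).atTop_div_const
    (by norm_num : (0 : ℝ) < 8))
  filter_upwards [eventually_gt_atTop 0] with E hE
  have hgap : ∀ x, E - F x = _ := fun x => (hF x).symm ▸ energy_sub_quartic_eq l E x hE.le
  have hS : l ^ 2 < √(l ^ 4 + 4 * E) := (Real.lt_sqrt (sq_nonneg l)).2 (by nlinarith)
  simp only [hgap]
  refine div_eight_le_integral_sq (Real.sqrt_pos.2 (by positivity)) (sub_pos.2 hS) ?_
    (hderiv E hE) (fun s => (eq_sub_of_add_eq (hode E hE s)).trans (hgap _)) (hinit E hE)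
    fun h0 => hE.ne' ?_
  · rw [Real.sq_sqrt (by positivity)]
    linarith [sq_nonneg l]
  · simpa [h0, hinit E hE, hF] using (hode E hE 0).symm

/-- Lemma 3.1 of the paper: Let `λ ≠ 0`, `F(κ) = κ⁴/4 - λ²κ²/2`, and for
each `E > 0` let `κ(E, ·)` solve `(κ')² + F(κ) = E` with `κ(E, 0) = 0`. With
`L(E) = 4∫₀^{κ_M(E)} dκ/√(E - F(κ))`, the quantity `∫₀^{L(E)} κ(E,s)² ds` tends to `∞`
as `E → ∞`. -/
theorem squared_curvature_integral_diverges (l : ℝ) (hl : l ≠ 0)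
    (F : ℝ → ℝ) (hF : ∀ x, F x = x ^ 4 / 4 - l ^ 2 / 2 * x ^ 2)
    (κ κ' : ℝ → ℝ → ℝ)
    (hderiv : ∀ E : ℝ, 0 < E → ∀ s : ℝ, HasDerivAt (κ E) (κ' E s) s)
    (hode : ∀ E : ℝ, 0 < E → ∀ s : ℝ, (κ' E s) ^ 2 + F (κ E s) = E)
    (hinit : ∀ E : ℝ, 0 < E → κ E 0 = 0) :
    Tendsto (fun E : ℝ =>
        ∫ s in (0 : ℝ)..(4 * ∫ x in (0 : ℝ)..(Real.sqrt (l ^ 2 + Real.sqrt (l ^ 4 + 4 * E))),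
            1 / Real.sqrt (E - F x)), (κ E s) ^ 2)
      atTop atTop :=
  squared_curvature_integral_diverges_general l F hF κ κ' hderiv hode hinit
end

section
/- Let $\lambda\ne0$, $F(\kappa)=\tfrac14\kappa^4-\tfrac{\lambda^2}2\kappa^2$, and for $E\in(-\lambda^4/4,0)$ let $\kappa_m(E)=\sqrt{\lambda^2-\sqrt{\lambda^4+4E}}$. Then the contribution $\tilde{\mathfrak{L}}_1(E)=\int_{\kappa_m}^{\kappa_m+\varepsilon/2}\frac{d\kappa}{\sqrt{E-F(\kappa)}}$ (for suitable fixed small $\varepsilon>0$) tends to $+\infty$ as $E\uparrow 0$; in particular the period $L(E)=2\int_{\kappa_m(E)}^{\kappa_M(E)}\frac{d\kappa}{\sqrt{E-F(\kappa)}}$ tends to $+\infty$ as $E\uparrow 0$. -/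
/-!
Since `E < 0`, `E - F(κ) ≤ λ²κ²`, so the integrand dominates `1/(|λ|κ)` and
`∫_{κ_m}^{κ_m + |λ|/2} dκ/√(E - F(κ)) ≥ (log(κ_m + |λ|/2) - log κ_m) / |λ|`,
which tends to `+∞` because `κ_m(E) → 0⁺`. The period dominates this piece.

These bounds say something only once the integrand is known to be integrable (otherwise the
integral is `0`). That follows from the factorisation
`E - F(κ) = (κ_M² - κ²)(κ² - κ_m²)/4 ≥ κ_m κ_M (κ - κ_m)(κ_M - κ)/4`:
the singularities at the turning points are of inverse square root type.
-/

open Filter MeasureTheory Set Topology Real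

theorem one_div_sqrt_mul_le {u v : ℝ} (hu : 0 < u) (hv : 0 < v) :
    1 / √(u * v) ≤ (1 / √u + 1 / √v) / √(u + v) := by
  have hs := Real.sqrt_pos.2 hu
  have ht := Real.sqrt_pos.2 hv
  have hsum : √(u + v) ≤ √u + √v := by
    rw [Real.sqrt_le_left (by positivity)]
    nlinarith [Real.sq_sqrt hu.le, Real.sq_sqrt hv.le]
  rw [Real.sqrt_mul hu.le, le_div_iff₀ (by positivity), div_add_div _ _ hs.ne' ht.ne',
    one_div_mul_eq_div, div_le_div_iff_of_pos_right (by positivity)]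
  linarith

theorem intervalIntegrable_one_div_sqrt_sub_mul_sub {a b : ℝ} (hab : a < b) :
    IntervalIntegrable (fun x => 1 / √((x - a) * (b - x))) volume a b := by
  have hdom : IntervalIntegrable
      (fun x => ((x - a) ^ (-(1 / 2) : ℝ) + (b - x) ^ (-(1 / 2) : ℝ)) / √(b - a))
      volume a b := by
    have hrpow := intervalIntegral.intervalIntegrable_rpow' (a := 0) (b := b - a)
      (r := -(1 / 2)) (by norm_num)
    refine (IntervalIntegrable.add ?_ ?_).div_const _
    · simpa using hrpow.comp_sub_right a
    · simpa using (hrpow.comp_sub_left b).symm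
  rw [intervalIntegrable_iff_integrableOn_Ioo_of_le hab.le] at hdom ⊢
  refine hdom.mono' (by fun_prop : Measurable _).aestronglyMeasurable
    (ae_restrict_of_forall_mem measurableSet_Ioo fun x hx => ?_)
  have hxa : 0 < x - a := sub_pos.2 hx.1
  have hbx : 0 < b - x := sub_pos.2 hx.2
  rw [Real.norm_of_nonneg (by positivity), Real.rpow_neg hxa.le, Real.rpow_neg hbx.le,
    ← Real.sqrt_eq_rpow, ← Real.sqrt_eq_rpow, ← one_div, ← one_div]
  simpa using one_div_sqrt_mul_le hxa hbx

theorem intervalIntegrable_one_div_sqrt_of_mul_le {f : ℝ → ℝ} {a b c : ℝ} (hab : a < b)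
    (hc : 0 < c) (hf : Measurable f) (h : ∀ x ∈ Ioo a b, c * ((x - a) * (b - x)) ≤ f x) :
    IntervalIntegrable (fun x => 1 / √(f x)) volume a b := by
  have hdom := (intervalIntegrable_one_div_sqrt_sub_mul_sub hab).const_mul (1 / √c)
  rw [intervalIntegrable_iff_integrableOn_Ioo_of_le hab.le] at hdom ⊢
  refine hdom.mono' (by fun_prop : Measurable _).aestronglyMeasurable
    (ae_restrict_of_forall_mem measurableSet_Ioo fun x hx => ?_)
  have hpos : 0 < c * ((x - a) * (b - x)) := by
    have := sub_pos.2 hx.1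
    have := sub_pos.2 hx.2
    positivity
  calc ‖1 / √(f x)‖ = 1 / √(f x) := Real.norm_of_nonneg (by positivity)
    _ ≤ 1 / √(c * ((x - a) * (b - x))) :=
      one_div_le_one_div_of_le (Real.sqrt_pos.2 hpos) (Real.sqrt_le_sqrt (h x hx))
    _ = 1 / √c * (1 / √((x - a) * (b - x))) := by
      rw [Real.sqrt_mul hc.le, one_div_mul_one_div]

theorem log_sub_log_div_le_integral_one_div_sqrt {g : ℝ → ℝ} {a b k : ℝ} (ha : 0 < a)
    (hab : a ≤ b) (hk : 0 < k) (hint : IntervalIntegrable (fun x => 1 / √(g x)) volume a b)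
    (hg : ∀ x ∈ Ioo a b, 0 < g x ∧ g x ≤ (k * x) ^ 2) :
    (log b - log a) / k ≤ ∫ x in a..b, 1 / √(g x) := by
  have hinv : IntervalIntegrable (fun x => k⁻¹ * x⁻¹) volume a b :=
    (intervalIntegral.intervalIntegrable_inv (fun x hx => ?_) continuousOn_id).const_mul _
  calc (log b - log a) / k = ∫ x in a..b, k⁻¹ * x⁻¹ := by
        rw [intervalIntegral.integral_const_mul, integral_inv_of_pos ha (ha.trans_le hab),
          Real.log_div (ha.trans_le hab).ne' ha.ne', div_eq_inv_mul]
    _ ≤ ∫ x in a..b, 1 / √(g x) := by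
      refine intervalIntegral.integral_mono_on_of_le_Ioo hab hinv hint fun x hx => ?_
      have hx0 : 0 < x := ha.trans hx.1
      rw [← mul_inv, ← one_div]
      refine one_div_le_one_div_of_le (Real.sqrt_pos.2 (hg x hx).1) ?_
      exact (Real.sqrt_le_sqrt (hg x hx).2).trans_eq (Real.sqrt_sq (mul_pos hk hx0).le)
  · rw [uIcc_of_le hab] at hx
    exact (ha.trans_le hx.1).ne'

noncomputable section

namespace DoubleWell

def potential (l x : ℝ) : ℝ := x ^ 4 / 4 - l ^ 2 / 2 * x ^ 2

def kappaMin (l E : ℝ) : ℝ := √(l ^ 2 - √(l ^ 4 + 4 * E))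

def kappaMax (l E : ℝ) : ℝ := √(l ^ 2 + √(l ^ 4 + 4 * E))

variable {l E x : ℝ}

theorem sub_potential_eq (hE₁ : -l ^ 4 / 4 ≤ E) (hE₂ : E ≤ 0) :
    E - potential l x = (kappaMax l E ^ 2 - x ^ 2) * (x ^ 2 - kappaMin l E ^ 2) / 4 := by
  have hdisc : 0 ≤ l ^ 4 + 4 * E := by linarith
  have hroot : √(l ^ 4 + 4 * E) ≤ l ^ 2 :=
    (Real.sqrt_le_left (sq_nonneg l)).2 (by nlinarith)
  rw [kappaMin, kappaMax, Real.sq_sqrt (by positivity), Real.sq_sqrt (by linarith), potential]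
  nlinarith [Real.sq_sqrt hdisc]

theorem sub_potential_le (hE : E ≤ 0) : E - potential l x ≤ (|l| * x) ^ 2 := by
  rw [potential, mul_pow, sq_abs]
  nlinarith [pow_nonneg (sq_nonneg x) 2, mul_nonneg (sq_nonneg l) (sq_nonneg x)]

theorem kappaMin_pos (hl : l ≠ 0) (hE : E < 0) : 0 < kappaMin l E := by
  have hl2 : 0 < l ^ 2 := by positivity
  refine Real.sqrt_pos.2 (sub_pos.2 ((Real.sqrt_lt' hl2).2 ?_))
  linarith

theorem kappaMin_lt_kappaMax (hE : -l ^ 4 / 4 < E) : kappaMin l E < kappaMax l E := by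
  have hroot : 0 < √(l ^ 4 + 4 * E) := Real.sqrt_pos.2 (by linarith)
  exact (Real.sqrt_lt_sqrt_iff_of_pos (by positivity)).2 (by linarith)

theorem abs_le_kappaMax : |l| ≤ kappaMax l E := by
  rw [← Real.sqrt_sq_eq_abs]
  exact Real.sqrt_le_sqrt (le_add_of_nonneg_right (Real.sqrt_nonneg _))

theorem sub_potential_pos (hE : E ∈ Ioo (-l ^ 4 / 4) 0)
    (hx : x ∈ Ioo (kappaMin l E) (kappaMax l E)) :
    0 < E - potential l x := by
  have hmin : 0 ≤ kappaMin l E := Real.sqrt_nonneg _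
  have hlow : kappaMin l E ^ 2 < x ^ 2 := pow_lt_pow_left₀ hx.1 hmin two_ne_zero
  have hhigh : x ^ 2 < kappaMax l E ^ 2 := pow_lt_pow_left₀ hx.2 (hmin.trans hx.1.le) two_ne_zero
  rw [sub_potential_eq hE.1.le hE.2.le]
  exact div_pos (mul_pos (sub_pos.2 hhigh) (sub_pos.2 hlow)) four_pos

theorem mul_le_sub_potential (hE : E ∈ Ioo (-l ^ 4 / 4) 0)
    (hx : x ∈ Ioo (kappaMin l E) (kappaMax l E)) :
    kappaMin l E * kappaMax l E / 4 * ((x - kappaMin l E) * (kappaMax l E - x)) ≤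
      E - potential l x := by
  have hmin : 0 ≤ kappaMin l E := Real.sqrt_nonneg _
  have hgap : 0 ≤ (x - kappaMin l E) * (kappaMax l E - x) :=
    mul_nonneg (sub_nonneg.2 hx.1.le) (sub_nonneg.2 hx.2.le)
  have hsum : kappaMin l E * kappaMax l E ≤ (x + kappaMin l E) * (kappaMax l E + x) := by
    nlinarith [hx.1, hx.2]
  rw [sub_potential_eq hE.1.le hE.2.le]
  nlinarith [mul_le_mul_of_nonneg_left hsum hgap]

theorem intervalIntegrable_period (hl : l ≠ 0) (hE : E ∈ Ioo (-l ^ 4 / 4) 0) :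
    IntervalIntegrable (fun x => 1 / √(E - potential l x)) volume
      (kappaMin l E) (kappaMax l E) := by
  have hmin := kappaMin_pos hl hE.2
  have hlt := kappaMin_lt_kappaMax hE.1
  exact intervalIntegrable_one_div_sqrt_of_mul_le hlt
    (div_pos (mul_pos hmin (hmin.trans hlt)) four_pos) (by unfold potential; fun_prop) fun _ hx => mul_le_sub_potential hE hx

theorem tendsto_kappaMin (hl : l ≠ 0) :
    Tendsto (kappaMin l) (𝓝[Ioo (-l ^ 4 / 4) 0] 0) (𝓝[>] 0) := by
  have hzero : kappaMin l 0 = 0 := by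
    rw [kappaMin, mul_zero, add_zero, show l ^ 4 = (l ^ 2) ^ 2 by ring,
      Real.sqrt_sq (sq_nonneg l), sub_self, Real.sqrt_zero]
  have hcont : Continuous (kappaMin l) := by unfold kappaMin; fun_prop
  exact tendsto_nhdsWithin_iff.2
    ⟨(hzero ▸ hcont.tendsto 0).mono_left nhdsWithin_le_nhds,
      eventually_nhdsWithin_of_forall fun E hE => kappaMin_pos hl hE.2⟩

theorem log_sub_log_div_le_integral (hl : l ≠ 0) (hE : E ∈ Ioo (-l ^ 4 / 4) 0)
    (hsmall : kappaMin l E < |l| / 2) :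
    (log (kappaMin l E + |l| / 2) - log (kappaMin l E)) / |l| ≤
      ∫ x in kappaMin l E..kappaMin l E + |l| / 2, 1 / √(E - potential l x) := by
  have hl' := abs_pos.2 hl
  have hend : kappaMin l E + |l| / 2 < kappaMax l E := by
    linarith [abs_le_kappaMax (l := l) (E := E)]
  have hmin := kappaMin_pos hl hE.2
  have hint := (intervalIntegrable_period hl hE).mono_set <| uIcc_subset_uIcc left_mem_uIcc <| by
    rw [uIcc_of_le (kappaMin_lt_kappaMax hE.1).le]
    exact ⟨by linarith, hend.le⟩
  refine log_sub_log_div_le_integral_one_div_sqrt hmin (by linarith) hl' hint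
    fun x hx => ⟨sub_potential_pos hE ⟨hx.1, hx.2.trans hend⟩, sub_potential_le hE.2.le⟩

theorem integral_le_two_mul_integral_period (hl : l ≠ 0) (hE : E ∈ Ioo (-l ^ 4 / 4) 0)
    (hsmall : kappaMin l E < |l| / 2) :
    ∫ x in kappaMin l E..kappaMin l E + |l| / 2, 1 / √(E - potential l x) ≤
      2 * ∫ x in kappaMin l E..kappaMax l E, 1 / √(E - potential l x) := by
  have hnonneg : ∀ x, 0 ≤ 1 / √(E - potential l x) := fun x => by positivity
  have hperiod : 0 ≤ ∫ x in kappaMin l E..kappaMax l E, 1 / √(E - potential l x) :=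
    intervalIntegral.integral_nonneg (kappaMin_lt_kappaMax hE.1).le fun x _ => hnonneg x
  calc _ ≤ ∫ x in kappaMin l E..kappaMax l E, 1 / √(E - potential l x) :=
        intervalIntegral.integral_mono_interval le_rfl (by linarith [abs_nonneg l])
          (by linarith [abs_le_kappaMax (l := l) (E := E)]) (ae_of_all _ hnonneg)
          (intervalIntegrable_period hl hE)
    _ ≤ _ := le_mul_of_one_le_left hperiod one_le_two

theorem tendsto_log_sub_log_kappaMin (hl : l ≠ 0) :
    Tendsto (fun E => (log (kappaMin l E + |l| / 2) - log (kappaMin l E)) / |l|)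
      (𝓝[Ioo (-l ^ 4 / 4) 0] 0) atTop := by
  have hl' : 0 < |l| := abs_pos.2 hl
  have hkappa := tendsto_kappaMin hl
  have hlogEnd : Tendsto (fun E => log (kappaMin l E + |l| / 2)) (𝓝[Ioo (-l ^ 4 / 4) 0] 0)
      (𝓝 (log (|l| / 2))) :=
    (by simpa using (hkappa.mono_right nhdsWithin_le_nhds).add_const (|l| / 2) :
      Tendsto (fun E => kappaMin l E + |l| / 2) _ _).log (half_pos hl').ne'
  simpa only [sub_eq_add_neg, Function.comp_apply] using Tendsto.atTop_div_const hl'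
    (hlogEnd.add_atTop (tendsto_neg_atBot_atTop.comp (tendsto_log_nhdsGT_zero.comp hkappa)))

end DoubleWell

end

open DoubleWell in
/-- With `F(κ) = κ⁴/4 - λ²κ²/2`, `κ_m(E) = √(λ² - √(λ⁴+4E))` and
`κ_M(E) = √(λ² + √(λ⁴+4E))` for `E ∈ (-λ⁴/4, 0)`, for some suitable fixed small `ε > 0`
the contribution `∫_{κ_m}^{κ_m + ε/2} dκ/√(E - F(κ))` tends to `+∞` as `E ↑ 0`;
in particular the period `L(E) = 2∫_{κ_m}^{κ_M} dκ/√(E - F(κ))` tends to `+∞` as `E ↑ 0`. -/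
theorem period_diverges_at_zero (l : ℝ) (hl : l ≠ 0) :
    (∃ ε > (0 : ℝ), Tendsto (fun E : ℝ =>
        ∫ x in (Real.sqrt (l ^ 2 - Real.sqrt (l ^ 4 + 4 * E)))..
            (Real.sqrt (l ^ 2 - Real.sqrt (l ^ 4 + 4 * E)) + ε / 2),
          1 / Real.sqrt (E - (x ^ 4 / 4 - l ^ 2 / 2 * x ^ 2)))
      (nhdsWithin 0 (Set.Ioo (-l ^ 4 / 4) 0)) atTop) ∧
    Tendsto (fun E : ℝ =>
        2 * ∫ x in (Real.sqrt (l ^ 2 - Real.sqrt (l ^ 4 + 4 * E)))..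
            (Real.sqrt (l ^ 2 + Real.sqrt (l ^ 4 + 4 * E))),
          1 / Real.sqrt (E - (x ^ 4 / 4 - l ^ 2 / 2 * x ^ 2)))
      (nhdsWithin 0 (Set.Ioo (-l ^ 4 / 4) 0)) atTop := by
  have hl' : 0 < |l| := abs_pos.2 hl
  have hnear : ∀ᶠ E in 𝓝[Ioo (-l ^ 4 / 4) 0] 0,
      E ∈ Ioo (-l ^ 4 / 4) 0 ∧ kappaMin l E < |l| / 2 :=
    eventually_mem_nhdsWithin.and <|
      ((tendsto_kappaMin hl).mono_right nhdsWithin_le_nhds).eventually_lt_const (half_pos hl')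
  have hhalf : Tendsto (fun E => ∫ x in kappaMin l E..kappaMin l E + |l| / 2,
      1 / √(E - potential l x)) (𝓝[Ioo (-l ^ 4 / 4) 0] 0) atTop :=
    tendsto_atTop_mono' _ (hnear.mono fun _ hE => log_sub_log_div_le_integral hl hE.1 hE.2)
      (tendsto_log_sub_log_kappaMin hl)
  exact ⟨⟨|l|, hl', hhalf⟩, tendsto_atTop_mono' _
    (hnear.mono fun _ hE => integral_le_two_mul_integral_period hl hE.1 hE.2) hhalf⟩
end

section
/- Let $\lambda\ne0$, $0<\alpha<\sqrt2|\lambda|$, $F(\kappa)=\tfrac14\kappa^4-\tfrac{\lambda^2}2\kappa^2$, and $L_2(E)=2\int_\alpha^{\kappa_M(E)}\frac{d\kappa}{\sqrt{E-F(\kappa)}}$ where $\kappa_M(E)=\sqrt{\lambda^2+\sqrt{\lambda^4+4E}}$. Then $L_2(E)\to 0$ as $E\to\infty$. -/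
/-!
Write `s = √(λ⁴ + 4E)` and `K = κ_M(E)`, so that `K² = λ² + s` and
`E - F(κ) = ¼ (K² - κ²)(κ² + s - λ²)`. For `0 ≤ κ ≤ K` this is at least
`¼ K (s - λ²) (K - κ)`, and `∫_α^K dκ/√(K - κ) = 2√(K - α) ≤ 2√K`, hence
`L₂(E) ≤ 8 / √(s - λ²)`, which tends to `0` because `s → ∞`.
-/

open Filter MeasureTheory Real

lemma one_div_sqrt_eq_rpow (t : ℝ) : 1 / √t = t ^ (-(1 / 2) : ℝ) := by
  rcases le_or_gt 0 t with ht | ht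
  · rw [rpow_neg ht, ← sqrt_eq_rpow, one_div]
  · -- junk values on both sides: `√t = 0`, and `t ^ y = exp (y log t) cos (yπ)` vanishes
    rw [sqrt_eq_zero_of_nonpos ht.le, rpow_def_of_neg ht,
      show -(1 / 2) * π = -(π / 2) by ring, cos_neg, cos_pi_div_two]
    simp

lemma intervalIntegrable_one_div_sqrt_sub (a K : ℝ) :
    IntervalIntegrable (fun x => 1 / √(K - x)) volume a K := by
  have h := (intervalIntegral.intervalIntegrable_rpow' (a := 0) (b := K - a)
    (r := -(1 / 2)) (by norm_num)).comp_sub_left K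
  simp only [sub_sub_cancel, sub_zero] at h
  simpa only [one_div_sqrt_eq_rpow] using h.symm

lemma integral_one_div_sqrt_sub (a K : ℝ) :
    ∫ x in a..K, 1 / √(K - x) = 2 * √(K - a) := by
  simp only [one_div_sqrt_eq_rpow]
  rw [intervalIntegral.integral_comp_sub_left (fun t : ℝ => t ^ (-(1 / 2) : ℝ)) K, sub_self,
    integral_rpow (Or.inl (by norm_num)), sqrt_eq_rpow]
  norm_num
  ring

lemma integral_one_div_sqrt_le_of_linear_le {g : ℝ → ℝ} {a K c : ℝ} (hg : Measurable g)
    (haK : a ≤ K) (hc : 0 < c) (hcg : ∀ x ∈ Set.Ioo a K, c * (K - x) ≤ g x) :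
    ∫ x in a..K, 1 / √(g x) ≤ 2 * √(K - a) / √c := by
  have hle : ∀ x ∈ Set.Ioo a K, 1 / √(g x) ≤ 1 / √c * (1 / √(K - x)) := by
    intro x hx
    have hKx : 0 < c * (K - x) := mul_pos hc (sub_pos.2 hx.2)
    rw [one_div_mul_one_div, ← sqrt_mul hc.le]
    exact one_div_le_one_div_of_le (sqrt_pos.2 hKx) (sqrt_le_sqrt (hcg x hx))
  have hmaj := (intervalIntegrable_one_div_sqrt_sub a K).const_mul (1 / √c)
  have hint : IntervalIntegrable (fun x => 1 / √(g x)) volume a K := by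
    rw [intervalIntegrable_iff_integrableOn_Ioo_of_le haK]
    have hmeas : Measurable fun x => 1 / √(g x) := by fun_prop
    refine ((intervalIntegrable_iff_integrableOn_Ioo_of_le haK).1 hmaj).mono'
      hmeas.aestronglyMeasurable (ae_restrict_of_forall_mem measurableSet_Ioo fun x hx => ?_)
    rw [norm_of_nonneg (by positivity)]
    exact hle x hx
  calc ∫ x in a..K, 1 / √(g x)
      ≤ ∫ x in a..K, 1 / √c * (1 / √(K - x)) :=
        intervalIntegral.integral_mono_on_of_le_Ioo haK hint hmaj hle
    _ = 2 * √(K - a) / √c := by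
        rw [intervalIntegral.integral_const_mul, integral_one_div_sqrt_sub]
        ring

section Quartic

variable (l E : ℝ)

lemma sub_quartic_eq (hE : 0 ≤ E) (x : ℝ) :
    E - (x ^ 4 / 4 - l ^ 2 / 2 * x ^ 2) =
      (l ^ 2 + √(l ^ 4 + 4 * E) - x ^ 2) * (x ^ 2 + √(l ^ 4 + 4 * E) - l ^ 2) / 4 := by
  linear_combination (-(1 / 4) : ℝ) * sq_sqrt (by positivity : 0 ≤ l ^ 4 + 4 * E)

lemma linear_le_sub_quartic (hE : 0 ≤ E) {x : ℝ} (hx : 0 ≤ x)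
    (hxK : x ≤ √(l ^ 2 + √(l ^ 4 + 4 * E))) :
    √(l ^ 2 + √(l ^ 4 + 4 * E)) * (√(l ^ 4 + 4 * E) - l ^ 2) / 4 *
        (√(l ^ 2 + √(l ^ 4 + 4 * E)) - x) ≤ E - (x ^ 4 / 4 - l ^ 2 / 2 * x ^ 2) := by
  set s := √(l ^ 4 + 4 * E)
  set K := √(l ^ 2 + s)
  have hs : l ^ 2 ≤ s := le_sqrt_of_sq_le (by linarith)
  have hK : K ^ 2 = l ^ 2 + s := sq_sqrt (by positivity)
  have hleft : K * (K - x) ≤ l ^ 2 + s - x ^ 2 := by nlinarith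
  have hright : s - l ^ 2 ≤ x ^ 2 + s - l ^ 2 := by nlinarith
  rw [sub_quartic_eq l E hE]
  linear_combination mul_le_mul hleft hright (by linarith) (by nlinarith) / 4

lemma integral_sub_quartic_le {α : ℝ} (hα : 0 < α) (hE : 0 < E)
    (hαK : α ≤ √(l ^ 2 + √(l ^ 4 + 4 * E))) :
    ∫ x in α..√(l ^ 2 + √(l ^ 4 + 4 * E)), 1 / √(E - (x ^ 4 / 4 - l ^ 2 / 2 * x ^ 2)) ≤
      4 / √(√(l ^ 4 + 4 * E) - l ^ 2) := by
  set s := √(l ^ 4 + 4 * E)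
  set K := √(l ^ 2 + s)
  have hs : l ^ 2 < s := lt_sqrt_of_sq_lt (by nlinarith)
  have hK : 0 < K := hα.trans_le hαK
  calc _ ≤ 2 * √(K - α) / √(K * (s - l ^ 2) / 4) :=
        integral_one_div_sqrt_le_of_linear_le (by fun_prop) hαK (by positivity)
          fun x hx => linear_le_sub_quartic l E hE.le (hα.trans hx.1).le hx.2.le
    _ ≤ 2 * √K / √(K * (s - l ^ 2) / 4) := by gcongr; linarith
    _ = 4 / √(s - l ^ 2) := by
        rw [sqrt_div' _ zero_le_four, sqrt_mul hK.le, show (4 : ℝ) = 2 ^ 2 by norm_num,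
          sqrt_sq zero_le_two]
        field_simp

end Quartic

lemma tendsto_sqrt_pow_four_add (l : ℝ) :
    Tendsto (fun E : ℝ => √(l ^ 4 + 4 * E)) atTop atTop :=
  tendsto_sqrt_atTop.comp <|
    tendsto_atTop_add_const_left _ _ <| tendsto_id.const_mul_atTop (by norm_num)

theorem L2_tendsto_zero_general (l α : ℝ) (hα : 0 < α) :
    Tendsto (fun E : ℝ =>
        2 * ∫ x in α..(Real.sqrt (l ^ 2 + Real.sqrt (l ^ 4 + 4 * E))),
          1 / Real.sqrt (E - (x ^ 4 / 4 - l ^ 2 / 2 * x ^ 2)))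
      atTop (nhds 0) := by
  have hlarge : ∀ᶠ E in atTop, 0 < E ∧ α ≤ √(l ^ 2 + √(l ^ 4 + 4 * E)) :=
    (eventually_gt_atTop 0).and <|
      (tendsto_sqrt_atTop.comp <|
        tendsto_atTop_add_const_left _ _ (tendsto_sqrt_pow_four_add l)).eventually_ge_atTop α
  have hbound : Tendsto (fun E : ℝ => 2 * (4 / √(√(l ^ 4 + 4 * E) - l ^ 2))) atTop (nhds 0) := by
    simpa [sub_eq_add_neg] using ((tendsto_sqrt_atTop.comp <|
      tendsto_atTop_add_const_right _ _ (tendsto_sqrt_pow_four_add l)).const_div_atTop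
      4).const_mul 2
  refine squeeze_zero' ?_ ?_ hbound
  · filter_upwards [hlarge] with E ⟨_, hαK⟩
    exact mul_nonneg zero_le_two <| intervalIntegral.integral_nonneg hαK fun _ _ => by positivity
  · filter_upwards [hlarge] with E ⟨hE, hαK⟩
    gcongr
    exact integral_sub_quartic_le l E hα hE hαK

/-- Lemma A.3: For `λ ≠ 0`, `0 < α < √2 |λ|`,
`L₂(E) = 2∫_α^{κ_M(E)} dκ/√(E - F(κ))` tends to `0` as `E → ∞`, where
`F(κ) = κ⁴/4 - λ²κ²/2` and `κ_M(E) = √(λ² + √(λ⁴+4E))`. -/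
theorem L2_tendsto_zero (l α : ℝ) (hl : l ≠ 0) (hα : 0 < α)
    (hα2 : α < Real.sqrt 2 * |l|) :
    Tendsto (fun E : ℝ =>
        2 * ∫ x in α..(Real.sqrt (l ^ 2 + Real.sqrt (l ^ 4 + 4 * E))),
          1 / Real.sqrt (E - (x ^ 4 / 4 - l ^ 2 / 2 * x ^ 2)))
      atTop (nhds 0) :=
  L2_tendsto_zero_general l α hα
end

section
/- Let $\mathfrak{q}$-polynomials in curvature derivatives be counted with weight $r=\sum_i(j_i+1)$ for a monomial $\prod_i\partial_s^{j_i}\kappa$. If under the flow $\partial_t\partial_s^j\kappa = -2\partial_s^{j+4}\kappa + \mathfrak{q}^{j+5}(\partial_s^{j+2}\kappa)+\mathfrak{q}^{j+3}(\partial_s^{j+2}\kappa)$ for all $j$, then for any $l,m$, $\partial_t\,\mathfrak{q}^l(\partial_s^m\kappa) = \mathfrak{q}^{l+4}(\partial_s^{m+4}\kappa)+\mathfrak{q}^{l+2}(\partial_s^{m+2}\kappa)$. -/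
/-
The weighted polynomials `𝔮^r(∂_s^l κ)` form a graded algebra: they are closed under sums,
constant multiples and products (weights add), and under raising the order bound `l`.
The time derivative of `K j` has the required shape by the flow, and the Leibniz rule
propagates that shape from the generators `K j` to products and then to linear combinations.
-/

/-- `IsQPoly K r l F` says that `F` is a polynomial `𝔮^r(∂_s^l κ)` in the curvature
derivatives `K j = ∂_s^j κ` : a finite linear combination with constant coefficients of
monomials `∏ᵢ ∂_s^{jᵢ}κ` with `0 ≤ jᵢ ≤ l`, at least one factor each, and weight
`∑ᵢ (jᵢ + 1) = r`. -/
def IsQPoly (K : ℕ → ℝ → ℝ → ℝ) (r l : ℕ) (F : ℝ → ℝ → ℝ) : Prop :=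
  ∃ (n : ℕ) (c : Fin n → ℝ) (J : Fin n → List ℕ),
    (∀ i, J i ≠ [] ∧ ∀ j ∈ J i, j ≤ l) ∧
    (∀ i, ((J i).map (· + 1)).sum = r) ∧
    ∀ x t : ℝ, F x t = ∑ i, c i * ((J i).map (fun j => K j x t)).prod

namespace IsQPoly

variable {K : ℕ → ℝ → ℝ → ℝ} {r r' l l' : ℕ} {F G : ℝ → ℝ → ℝ}

theorem zero (K : ℕ → ℝ → ℝ → ℝ) (r l : ℕ) : IsQPoly K r l fun _ _ => 0 :=
  ⟨0, Fin.elim0, Fin.elim0, fun i => i.elim0, fun i => i.elim0, by simp⟩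

theorem listProd {L : List ℕ} (hne : L ≠ []) (hle : ∀ j ∈ L, j ≤ l) :
    IsQPoly K (L.map (· + 1)).sum l fun x t => (L.map (fun j => K j x t)).prod :=
  ⟨1, fun _ => 1, fun _ => L, fun _ => ⟨hne, hle⟩, fun _ => rfl, by simp⟩

theorem curvatureDeriv {j : ℕ} (hj : j ≤ l) : IsQPoly K (j + 1) l (K j) := by
  simpa using listProd (K := K) (L := [j]) (List.cons_ne_nil j []) (by simpa using hj)

theorem mono (h : l ≤ l') (hF : IsQPoly K r l F) : IsQPoly K r l' F := by
  obtain ⟨n, c, J, hJ, hw, hF⟩ := hF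
  exact ⟨n, c, J, fun i => ⟨(hJ i).1, fun j hj => ((hJ i).2 j hj).trans h⟩, hw, hF⟩

theorem const_mul (a : ℝ) (hF : IsQPoly K r l F) : IsQPoly K r l fun x t => a * F x t := by
  obtain ⟨n, c, J, hJ, hw, hF⟩ := hF
  refine ⟨n, fun i => a * c i, J, hJ, hw, fun x t => ?_⟩
  simp only [hF, Finset.mul_sum, mul_assoc]

theorem add (hF : IsQPoly K r l F) (hG : IsQPoly K r l G) :
    IsQPoly K r l fun x t => F x t + G x t := by
  obtain ⟨n, c, J, hJ, hw, hF⟩ := hF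
  obtain ⟨n', c', J', hJ', hw', hG⟩ := hG
  refine ⟨n + n', Fin.append c c', Fin.append J J',
    Fin.addCases (by simpa using hJ) (by simpa using hJ'),
    Fin.addCases (by simpa using hw) (by simpa using hw'), fun x t => ?_⟩
  simp [Fin.sum_univ_add, hF, hG]

theorem sum {ι : Type*} (s : Finset ι) {F : ι → ℝ → ℝ → ℝ} (hF : ∀ i ∈ s, IsQPoly K r l (F i)) :
    IsQPoly K r l fun x t => ∑ i ∈ s, F i x t := by
  classical
  induction s using Finset.induction_on with
  | empty => simpa using zero K r l
  | insert a s ha ih =>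
    simpa [Finset.sum_insert ha] using
      (hF a (s.mem_insert_self a)).add (ih fun i hi => hF i (Finset.mem_insert_of_mem hi))

theorem mul_listProd (hF : IsQPoly K r l F) {L : List ℕ} (hle : ∀ j ∈ L, j ≤ l) :
    IsQPoly K (r + (L.map (· + 1)).sum) l fun x t => F x t * (L.map (fun j => K j x t)).prod := by
  obtain ⟨n, c, J, hJ, hw, hF⟩ := hF
  refine ⟨n, c, fun i => J i ++ L, fun i => ⟨by simp [(hJ i).1], ?_⟩, fun i => by simp [hw i],
    fun x t => by simp only [hF, Finset.sum_mul, List.map_append, List.prod_append, mul_assoc]⟩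
  simpa only [List.mem_append] using fun j hj => hj.elim ((hJ i).2 j) (hle j)

theorem mul (hF : IsQPoly K r l F) (hG : IsQPoly K r' l G) :
    IsQPoly K (r + r') l fun x t => F x t * G x t := by
  obtain ⟨n, c, J, hJ, hw, hG⟩ := hG
  have hterm : ∀ i ∈ Finset.univ, IsQPoly K (r + r') l
      fun x t => c i * (F x t * ((J i).map (fun j => K j x t)).prod) := fun i _ => by
    simpa only [hw i] using (hF.mul_listProd (hJ i).2).const_mul (c i)
  convert sum Finset.univ hterm using 3 with x t
  simp only [hG, Finset.mul_sum]
  ring_nf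

end IsQPoly

def IsCurvatureFlow (K : ℕ → ℝ → ℝ → ℝ) : Prop :=
  ∀ j : ℕ, ∃ P Q : ℝ → ℝ → ℝ,
    IsQPoly K (j + 5) (j + 2) P ∧ IsQPoly K (j + 3) (j + 2) Q ∧
    ∀ x t : ℝ, HasDerivAt (fun τ => K j x τ) (-2 * K (j + 4) x t + P x t + Q x t) t

def HasQPolyTimeDeriv (K : ℕ → ℝ → ℝ → ℝ) (l m : ℕ) (F : ℝ → ℝ → ℝ) : Prop :=
  ∃ P Q : ℝ → ℝ → ℝ,
    IsQPoly K (l + 4) (m + 4) P ∧ IsQPoly K (l + 2) (m + 2) Q ∧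
    ∀ x t : ℝ, HasDerivAt (fun τ => F x τ) (P x t + Q x t) t

namespace HasQPolyTimeDeriv

variable {K : ℕ → ℝ → ℝ → ℝ} {l l' m : ℕ} {F G : ℝ → ℝ → ℝ}

theorem zero (K : ℕ → ℝ → ℝ → ℝ) (l m : ℕ) : HasQPolyTimeDeriv K l m fun _ _ => 0 :=
  ⟨_, _, IsQPoly.zero K _ _, IsQPoly.zero K _ _, fun _ t => by simpa using hasDerivAt_const t 0⟩

theorem add (hF : HasQPolyTimeDeriv K l m F) (hG : HasQPolyTimeDeriv K l m G) :
    HasQPolyTimeDeriv K l m fun x t => F x t + G x t := by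
  obtain ⟨P, Q, hP, hQ, hF⟩ := hF
  obtain ⟨P', Q', hP', hQ', hG⟩ := hG
  refine ⟨_, _, hP.add hP', hQ.add hQ', fun x t => ?_⟩
  exact ((hF x t).add (hG x t)).congr_deriv (by ring)

theorem const_mul (a : ℝ) (hF : HasQPolyTimeDeriv K l m F) :
    HasQPolyTimeDeriv K l m fun x t => a * F x t := by
  obtain ⟨P, Q, hP, hQ, hF⟩ := hF
  refine ⟨_, _, hP.const_mul a, hQ.const_mul a, fun x t => ?_⟩
  exact ((hF x t).const_mul a).congr_deriv (by ring)

theorem sum {ι : Type*} (s : Finset ι) {F : ι → ℝ → ℝ → ℝ}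
    (hF : ∀ i ∈ s, HasQPolyTimeDeriv K l m (F i)) :
    HasQPolyTimeDeriv K l m fun x t => ∑ i ∈ s, F i x t := by
  classical
  induction s using Finset.induction_on with
  | empty => simpa using zero K l m
  | insert a s ha ih =>
    simpa [Finset.sum_insert ha] using
      (hF a (s.mem_insert_self a)).add (ih fun i hi => hF i (Finset.mem_insert_of_mem hi))

theorem mul (hF' : HasQPolyTimeDeriv K l m F) (hG' : HasQPolyTimeDeriv K l' m G)
    (hF : IsQPoly K l m F) (hG : IsQPoly K l' m G) :
    HasQPolyTimeDeriv K (l + l') m fun x t => F x t * G x t := by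
  obtain ⟨P, Q, hP, hQ, hdF⟩ := hF'
  obtain ⟨P', Q', hP', hQ', hdG⟩ := hG'
  have hPG := hP.mul (hG.mono (m.le_add_right 4))
  have hFP' := (hF.mono (m.le_add_right 4)).mul hP'
  have hQG := hQ.mul (hG.mono (m.le_add_right 2))
  have hFQ' := (hF.mono (m.le_add_right 2)).mul hQ'
  rw [Nat.add_right_comm] at hPG hQG
  rw [← Nat.add_assoc] at hFP' hFQ'
  refine ⟨_, _, hPG.add hFP', hQG.add hFQ', fun x t => ?_⟩
  exact ((hdF x t).mul (hdG x t)).congr_deriv (by ring)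

theorem curvatureDeriv (hK : IsCurvatureFlow K) {j : ℕ} (hj : j ≤ m) :
    HasQPolyTimeDeriv K (j + 1) m (K j) := by
  obtain ⟨P, Q, hP, hQ, hd⟩ := hK j
  have hK4 : IsQPoly K (j + 1 + 4) (m + 4) fun x t => -2 * K (j + 4) x t :=
    (IsQPoly.curvatureDeriv (by omega : j + 4 ≤ m + 4)).const_mul (-2)
  refine ⟨_, Q, hK4.add (hP.mono (by omega)), hQ.mono (by omega), fun x t => ?_⟩
  exact (hd x t).congr_deriv (by ring)

theorem listProd (hK : IsCurvatureFlow K) {L : List ℕ} (hne : L ≠ []) (hle : ∀ j ∈ L, j ≤ m) :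
    HasQPolyTimeDeriv K (L.map (· + 1)).sum m fun x t => (L.map (fun j => K j x t)).prod := by
  induction L with
  | nil => exact absurd rfl hne
  | cons j L ih =>
    have hj : HasQPolyTimeDeriv K (j + 1) m (K j) := curvatureDeriv hK (hle j (by simp))
    rcases eq_or_ne L [] with rfl | hL
    · simpa using hj
    have hLm : ∀ i ∈ L, i ≤ m := fun i hi => hle i (List.mem_cons_of_mem j hi)
    simpa using hj.mul (ih hL hLm) (IsQPoly.curvatureDeriv (hle j (by simp)))
      (IsQPoly.listProd hL hLm)

end HasQPolyTimeDeriv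

theorem IsQPoly.hasQPolyTimeDeriv {K : ℕ → ℝ → ℝ → ℝ} (hK : IsCurvatureFlow K) {l m : ℕ}
    {F : ℝ → ℝ → ℝ} (hF : IsQPoly K l m F) : HasQPolyTimeDeriv K l m F := by
  obtain ⟨n, c, J, hJ, hw, hF⟩ := hF
  obtain rfl : F = fun x t => ∑ i, c i * ((J i).map (fun j => K j x t)).prod :=
    funext₂ hF
  refine HasQPolyTimeDeriv.sum Finset.univ fun i _ => ?_
  simpa only [hw i] using ((HasQPolyTimeDeriv.listProd hK (hJ i).1 (hJ i).2).const_mul (c i))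

/-- Lemma B.5, formula \eqref{mfq-t}: if the curvature derivatives
`K j = ∂_s^j κ` evolve by
`∂_t ∂_s^j κ = -2 ∂_s^{j+4}κ + 𝔮^{j+5}(∂_s^{j+2}κ) + 𝔮^{j+3}(∂_s^{j+2}κ)` for all `j`,
then for any `l, m` and any `𝔮^l(∂_s^m κ)`-polynomial `F`,
`∂_t F = 𝔮^{l+4}(∂_s^{m+4}κ) + 𝔮^{l+2}(∂_s^{m+2}κ)`. -/
theorem qpoly_time_derivative (K : ℕ → ℝ → ℝ → ℝ)
    (hflow : ∀ j : ℕ, ∃ P Q : ℝ → ℝ → ℝ,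
      IsQPoly K (j + 5) (j + 2) P ∧ IsQPoly K (j + 3) (j + 2) Q ∧
      ∀ x t : ℝ, HasDerivAt (fun τ => K j x τ)
        (-2 * K (j + 4) x t + P x t + Q x t) t) :
    ∀ (l m : ℕ) (F : ℝ → ℝ → ℝ), IsQPoly K l m F →
      ∃ P Q : ℝ → ℝ → ℝ,
        IsQPoly K (l + 4) (m + 4) P ∧ IsQPoly K (l + 2) (m + 2) Q ∧
        ∀ x t : ℝ, HasDerivAt (fun τ => F x τ) (P x t + Q x t) t :=
  fun _ _ _ hF => hF.hasQPolyTimeDeriv hflow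
end
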